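/- For α ∈ (0,2) and β ∈ (-1,α), the integral γ(α,β) := ∫₀¹ (t^β - 1)(1 - t^{α-β-1})/(1-t)^{1+α} dt is absolutely convergent, and γ(α,β) ≤ 0 if and only if β·(α-β-1) ≥ 0. -/

import Mathlib

open Real MeasureTheory

lemma rpow_sub_one_lip (s : ℝ) :
    ∃ C : ℝ, 0 ≤ C ∧ ∀ t ∈ Set.Icc (1/2:ℝ) 1, |t ^ s - 1| ≤ C * (1 - t) := by
  refine ⟨|s| * ((1/2:ℝ) ^ (s-1) + 1), by positivity, fun t ht => ?_⟩
  have h1 : ∀ x ∈ Set.Icc (1/2:ℝ) 1,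
      HasDerivWithinAt (fun y : ℝ => y ^ s) (s * x ^ (s-1)) (Set.Icc (1/2:ℝ) 1) x := by
    intro x hx
    exact (Real.hasDerivAt_rpow_const (Or.inl (by nlinarith [hx.1]))).hasDerivWithinAt
  have hb : ∀ x ∈ Set.Icc (1/2:ℝ) 1,
      ‖s * x ^ (s-1)‖ ≤ |s| * ((1/2:ℝ) ^ (s-1) + 1) := by
    intro x hx
    rw [norm_mul, Real.norm_eq_abs, Real.norm_eq_abs,
      abs_of_nonneg (Real.rpow_nonneg (by linarith [hx.1]) _)]
    have hx0 : (0:ℝ) < x := by linarith [hx.1]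
    have : x ^ (s-1) ≤ (1/2:ℝ) ^ (s-1) + 1 := by
      rcases le_or_gt (s-1) 0 with h | h
      · have := Real.rpow_le_rpow_of_nonpos (by norm_num) hx.1 h
        linarith
      · have h2 : (0:ℝ) ≤ (1/2:ℝ) ^ (s-1) := Real.rpow_nonneg (by norm_num) _
        linarith [Real.rpow_le_one hx0.le hx.2 h.le]
    exact mul_le_mul_of_nonneg_left this (abs_nonneg s)
  have key := (convex_Icc (1/2:ℝ) 1).norm_image_sub_le_of_norm_hasDerivWithin_le h1 hb
    (Set.right_mem_Icc.mpr (by norm_num)) ht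
  simpa [Real.one_rpow, abs_of_nonpos (sub_nonpos.mpr ht.2), neg_sub] using key

theorem gamma_integrable_and_sign (α β : ℝ) (hα : α ∈ Set.Ioo (0:ℝ) 2)
    (hβ : β ∈ Set.Ioo (-1:ℝ) α) :
    IntegrableOn (fun t : ℝ => (t ^ β - 1) * (1 - t ^ (α - β - 1)) / (1 - t) ^ (1 + α))
        (Set.Ioo 0 1) ∧
      ((∫ t in Set.Ioo (0:ℝ) 1, (t ^ β - 1) * (1 - t ^ (α - β - 1)) / (1 - t) ^ (1 + α)) ≤ 0
        ↔ 0 ≤ β * (α - β - 1)) := by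
  obtain ⟨hα0, hα2⟩ := hα
  obtain ⟨hβ1, hβα⟩ := hβ
  set f : ℝ → ℝ := fun t => (t ^ β - 1) * (1 - t ^ (α - β - 1)) / (1 - t) ^ (1 + α) with hf
  have hc1 : (-1:ℝ) < α - β - 1 := by linarith
  have hmeas : Measurable f := by
    apply Measurable.div
    · exact ((measurable_id.pow measurable_const).sub measurable_const).mul
        (measurable_const.sub (measurable_id.pow measurable_const))
    · exact (measurable_const.sub measurable_id).pow measurable_const
  -- integrability on (0, 1/2]
  have I1 : IntegrableOn f (Set.Ioc 0 (1/2:ℝ)) := by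
    set g1 : ℝ → ℝ := fun t => ((t ^ β + 1) * (1 + t ^ (α - β - 1))) / ((1/2:ℝ) ^ (1+α))
      with hg1
    have iβ : IntegrableOn (fun t : ℝ => t ^ β) (Set.Ioc 0 (1/2:ℝ)) :=
      (intervalIntegral.intervalIntegrable_rpow' (a := 0) (b := 1/2) hβ1).1
    have ic : IntegrableOn (fun t : ℝ => t ^ (α - β - 1)) (Set.Ioc 0 (1/2:ℝ)) :=
      (intervalIntegral.intervalIntegrable_rpow' (a := 0) (b := 1/2) hc1).1
    have ia : IntegrableOn (fun t : ℝ => t ^ (α - 1)) (Set.Ioc 0 (1/2:ℝ)) :=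
      (intervalIntegral.intervalIntegrable_rpow' (a := 0) (b := 1/2) (by linarith)).1
    have i1 : IntegrableOn (fun _ : ℝ => (1:ℝ)) (Set.Ioc 0 (1/2:ℝ)) :=
      (integrableOn_const_iff).mpr (Or.inr measure_Ioc_lt_top)
    have g1int : IntegrableOn g1 (Set.Ioc 0 (1/2:ℝ)) := by
      have hsum : IntegrableOn
          (fun t : ℝ => (t ^ β + t ^ (α - 1) + t ^ (α - β - 1) + 1) / ((1/2:ℝ) ^ (1+α)))
          (Set.Ioc 0 (1/2:ℝ)) := (((iβ.add ia).add ic).add i1).div_const _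
      apply hsum.congr_fun ?_ measurableSet_Ioc
      intro t ht
      have ht0 : (0:ℝ) < t := ht.1
      have : t ^ β * t ^ (α - β - 1) = t ^ (α - 1) := by
        rw [← Real.rpow_add ht0]; ring_nf
      simp only [hg1]
      field_simp
      nlinarith [this]
    refine g1int.integrable.mono hmeas.aestronglyMeasurable.restrict ?_
    rw [ae_restrict_iff' measurableSet_Ioc]
    refine ae_of_all _ fun t ht => ?_
    have ht0 : (0:ℝ) < t := ht.1
    have ht2 : t ≤ 1/2 := ht.2
    have h1t : (1/2:ℝ) ≤ 1 - t := by linarith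
    have hβnn : (0:ℝ) ≤ t ^ β := Real.rpow_nonneg ht0.le _
    have hcnn : (0:ℝ) ≤ t ^ (α - β - 1) := Real.rpow_nonneg ht0.le _
    have hdenpos : (0:ℝ) < (1/2:ℝ) ^ (1+α) := Real.rpow_pos_of_pos (by norm_num) _
    have hden : (1/2:ℝ) ^ (1+α) ≤ (1 - t) ^ (1+α) :=
      Real.rpow_le_rpow (by norm_num) h1t (by linarith)
    have hnum : |(t ^ β - 1) * (1 - t ^ (α - β - 1))| ≤ (t ^ β + 1) * (1 + t ^ (α - β - 1)) := by
      rw [abs_mul]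
      apply mul_le_mul ?_ ?_ (abs_nonneg _) (by positivity)
      · calc |t ^ β - 1| ≤ |t ^ β| + |(1:ℝ)| := abs_sub _ _
          _ = t ^ β + 1 := by rw [abs_of_nonneg hβnn]; norm_num
      · calc |1 - t ^ (α - β - 1)| ≤ |(1:ℝ)| + |t ^ (α - β - 1)| := abs_sub _ _
          _ = 1 + t ^ (α - β - 1) := by rw [abs_of_nonneg hcnn]; norm_num
    rw [Real.norm_eq_abs, Real.norm_eq_abs, hf, hg1]
    have hg1nn : (0:ℝ) ≤ ((t ^ β + 1) * (1 + t ^ (α - β - 1))) / ((1/2:ℝ) ^ (1+α)) := by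
      positivity
    rw [abs_of_nonneg hg1nn, abs_div,
      abs_of_nonneg (Real.rpow_nonneg (by linarith : (0:ℝ) ≤ 1 - t) _)]
    exact div_le_div₀ (by positivity) hnum hdenpos hden
  -- integrability on (1/2, 1)
  have I2 : IntegrableOn f (Set.Ioo (1/2:ℝ) 1) := by
    obtain ⟨C1, hC1, hb1⟩ := rpow_sub_one_lip β
    obtain ⟨C2, hC2, hb2⟩ := rpow_sub_one_lip (α - β - 1)
    have base : IntervalIntegrable (fun x : ℝ => x ^ (1 - α)) volume 0 (1/2) :=
      intervalIntegral.intervalIntegrable_rpow' (by linarith)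
    have comp := base.comp_sub_left 1
    norm_num at comp
    have g2int : IntegrableOn (fun t : ℝ => C1 * C2 * (1 - t) ^ (1 - α))
        (Set.Ioo (1/2:ℝ) 1) := by
      have h' : IntegrableOn (fun t : ℝ => C1 * C2 * (1 - t) ^ (1 - α))
          (Set.Ioc (1/2:ℝ) 1) := comp.2.const_mul _
      exact h'.mono_set Set.Ioo_subset_Ioc_self
    refine g2int.integrable.mono hmeas.aestronglyMeasurable.restrict ?_
    rw [ae_restrict_iff' measurableSet_Ioo]
    refine ae_of_all _ fun t ht => ?_
    have ht1 : (1/2:ℝ) < t := ht.1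
    have ht2 : t < 1 := ht.2
    have hu : (0:ℝ) < 1 - t := by linarith
    have htIcc : t ∈ Set.Icc (1/2:ℝ) 1 := ⟨ht1.le, ht2.le⟩
    have e1 := hb1 t htIcc
    have e2 := hb2 t htIcc
    have hnum : |(t ^ β - 1) * (1 - t ^ (α - β - 1))| ≤ C1 * C2 * ((1 - t) * (1 - t)) := by
      rw [abs_mul]
      calc |t ^ β - 1| * |1 - t ^ (α - β - 1)|
          ≤ (C1 * (1 - t)) * (C2 * (1 - t)) := by
            apply mul_le_mul e1 ?_ (abs_nonneg _) (by positivity)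
            rw [abs_sub_comm]; exact e2
        _ = C1 * C2 * ((1 - t) * (1 - t)) := by ring
    have hid : (1 - t) * (1 - t) / (1 - t) ^ (1 + α) = (1 - t) ^ (1 - α) := by
      have h2 : (1 - t) * (1 - t) = (1 - t) ^ ((2:ℕ):ℝ) := by
        rw [Real.rpow_natCast]; ring
      rw [h2, ← Real.rpow_sub hu]
      norm_num
      congr 1
      ring
    have hdenpos : (0:ℝ) < (1 - t) ^ (1 + α) := Real.rpow_pos_of_pos hu _
    rw [Real.norm_eq_abs, Real.norm_eq_abs, hf]
    have hg2nn : (0:ℝ) ≤ C1 * C2 * (1 - t) ^ (1 - α) := by positivity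
    rw [abs_of_nonneg hg2nn, abs_div, abs_of_nonneg hdenpos.le]
    calc |(t ^ β - 1) * (1 - t ^ (α - β - 1))| / (1 - t) ^ (1 + α)
        ≤ C1 * C2 * ((1 - t) * (1 - t)) / (1 - t) ^ (1 + α) :=
          (div_le_div_iff_of_pos_right hdenpos).mpr hnum
      _ = C1 * C2 * ((1 - t) * (1 - t) / (1 - t) ^ (1 + α)) := by ring
      _ = C1 * C2 * (1 - t) ^ (1 - α) := by rw [hid]
  have Iint : IntegrableOn f (Set.Ioo (0:ℝ) 1) := by
    refine (I1.union I2).mono_set ?_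
    intro t ht
    rcases le_or_gt t (1/2) with h | h
    · exact Or.inl ⟨ht.1, h⟩
    · exact Or.inr ⟨h, ht.2⟩
  have hdenpos : ∀ t ∈ Set.Ioo (0:ℝ) 1, (0:ℝ) < (1 - t) ^ (1 + α) := fun t ht =>
    Real.rpow_pos_of_pos (by linarith [ht.2]) _
  refine ⟨Iint, ?_, ?_⟩
  · intro hle
    by_contra hneg
    push_neg at hneg
    have hpos : ∀ t ∈ Set.Ioo (0:ℝ) 1, 0 < f t := by
      intro t ht
      have ht0 := ht.1
      have ht1 := ht.2
      rcases mul_neg_iff.mp hneg with ⟨hb, hcn⟩ | ⟨hb, hcn⟩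
      · have h1 : t ^ β < 1 := Real.rpow_lt_one ht0.le ht1 hb
        have h2 : 1 < t ^ (α - β - 1) :=
          (Real.one_lt_rpow_iff_of_pos ht0).mpr (Or.inr ⟨ht1, hcn⟩)
        exact div_pos (mul_pos_of_neg_of_neg (by linarith) (by linarith)) (hdenpos t ht)
      · have h1 : 1 < t ^ β :=
          (Real.one_lt_rpow_iff_of_pos ht0).mpr (Or.inr ⟨ht1, hb⟩)
        have h2 : t ^ (α - β - 1) < 1 := Real.rpow_lt_one ht0.le ht1 hcn
        exact div_pos (mul_pos (by linarith) (by linarith)) (hdenpos t ht)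
    have h0 : 0 ≤ᵐ[volume.restrict (Set.Ioo (0:ℝ) 1)] f :=
      (ae_restrict_iff' measurableSet_Ioo).mpr
        (ae_of_all _ fun t ht => (hpos t ht).le)
    have hsupp : Set.Ioo (0:ℝ) 1 ⊆ Function.support f ∩ Set.Ioo (0:ℝ) 1 :=
      fun t ht => ⟨(hpos t ht).ne', ht⟩
    have hμ : 0 < volume (Function.support f ∩ Set.Ioo (0:ℝ) 1) := by
      refine lt_of_lt_of_le ?_ (measure_mono hsupp)
      rw [Real.volume_Ioo]
      norm_num
    have := (setIntegral_pos_iff_support_of_nonneg_ae h0 Iint).mpr hμ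
    linarith
  · intro hge
    apply setIntegral_nonpos measurableSet_Ioo
    intro t ht
    have ht0 := ht.1
    have ht1 := ht.2
    rcases mul_nonneg_iff.mp hge with ⟨hb, hcn⟩ | ⟨hb, hcn⟩
    · have h1 : t ^ β ≤ 1 := Real.rpow_le_one ht0.le ht1.le hb
      have h2 : (0:ℝ) ≤ t ^ (α - β - 1) ∧ t ^ (α - β - 1) ≤ 1 :=
        ⟨Real.rpow_nonneg ht0.le _, Real.rpow_le_one ht0.le ht1.le hcn⟩
      exact div_nonpos_of_nonpos_of_nonneg
        (mul_nonpos_of_nonpos_of_nonneg (by linarith) (by linarith [h2.2]))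
        (hdenpos t ht).le
    · have h1 : 1 ≤ t ^ β :=
        Real.one_le_rpow_of_pos_of_le_one_of_nonpos ht0 ht1.le hb
      have h2 : 1 ≤ t ^ (α - β - 1) :=
        Real.one_le_rpow_of_pos_of_le_one_of_nonpos ht0 ht1.le hcn
      exact div_nonpos_of_nonpos_of_nonneg
        (mul_nonpos_of_nonneg_of_nonpos (by linarith) (by linarith))
        (hdenpos t ht).le
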